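/- arXiv:2506.02712 — 2 statements merged into one kernel-verified Lean document; each statement's English description precedes it below -/
import Mathlib

section
/- Empirical target loss bound (feature-based, core inequality): let ℓ be a metric on Y with values in [0,1], f : X → ℝ^d, g : ℝ^d → Y γ-Lipschitz with respect to ℓ, and w = g ∘ f. Let (x_i, y_i), i=1..n_s, be source pairs and (x̃_j, ỹ_j), j=1..n_t, be target pairs. Let Π be any n_s × n_t matrix with nonnegative entries, row sums p_i = ∑_j Π_{ij}, column sums q_j = ∑_i Π_{ij}, and total mass α > 0. Suppose L ≥ 0 is such that |ℓ(w(x_i),y_i) − ℓ(w(x̃_j),ỹ_j)| ≤ 2γ‖f(x_i)−f(x̃_j)‖ + 2L for all i,j. Then (1/n_t) ∑_j ℓ(w(x̃_j),ỹ_j) ≤ ∑_i (p_i/α) ℓ(w(x_i),y_i) + (2/α) ∑_{i,j} γ‖f(x_i)−f(x̃_j)‖ Π_{ij} + (1/2) ∑_j |1/n_t − q_j/α| + 2L. -/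
/-!
Let `S i`, `T j` be the source and target losses and `q j = (∑ i, Π i j) / α` the normalised
target marginal of the coupling. The average target loss is
`∑ j, q j * T j + ∑ j, (1 / nₜ - q j) * T j`. Transporting the first
term along `Π` with the pointwise comparison `T j ≤ S i + 2γ‖f xᵢ - f x̃ⱼ‖ + 2L` gives the source
and transport terms; the second term pairs two probability vectors against losses in `[0, 1]`,
so it is at most half their `ℓ¹` distance.
-/

open Finset

namespace Finset

variable {ι κ : Type*}

theorem sum_mul_sub_sum_mul_le_of_sum_eq (s : Finset ι) {a b T : ι → ℝ} {lo hi : ℝ}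
    (hab : ∑ j ∈ s, a j = ∑ j ∈ s, b j) (hT : ∀ j ∈ s, T j ∈ Set.Icc lo hi) :
    ∑ j ∈ s, a j * T j - ∑ j ∈ s, b j * T j ≤ (hi - lo) / 2 * ∑ j ∈ s, |a j - b j| := by
  set m := (lo + hi) / 2 with hm
  -- subtracting the midpoint `m` from `T` changes nothing, as `a - b` has total mass zero
  have hcentre : ∑ j ∈ s, a j * T j - ∑ j ∈ s, b j * T j
      = ∑ j ∈ s, (a j - b j) * (T j - m) := by
    have : ∑ j ∈ s, (a j - b j) * m = 0 := by
      rw [← sum_mul, sum_sub_distrib, hab, sub_self, zero_mul]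
    simp only [mul_sub, sub_mul, sum_sub_distrib] at this ⊢
    linarith
  rw [hcentre, mul_sum]
  refine sum_le_sum fun j hj => ?_
  have hdev : |T j - m| ≤ (hi - lo) / 2 := by
    obtain ⟨hlo, hhi⟩ := hT j hj
    rw [abs_le, hm]
    constructor <;> linarith
  calc (a j - b j) * (T j - m) ≤ |a j - b j| * |T j - m| := by
        rw [← abs_mul]; exact le_abs_self _
    _ ≤ |a j - b j| * ((hi - lo) / 2) := by gcongr
    _ = (hi - lo) / 2 * |a j - b j| := mul_comm _ _

theorem sum_colSum_mul_le_sum_rowSum_mul_add (s : Finset ι) (t : Finset κ) {P c : ι → κ → ℝ}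
    {S : ι → ℝ} {T : κ → ℝ} (hP : ∀ i ∈ s, ∀ j ∈ t, 0 ≤ P i j)
    (hST : ∀ i ∈ s, ∀ j ∈ t, T j ≤ S i + c i j) :
    ∑ j ∈ t, (∑ i ∈ s, P i j) * T j ≤
      ∑ i ∈ s, (∑ j ∈ t, P i j) * S i + ∑ i ∈ s, ∑ j ∈ t, c i j * P i j := by
  calc ∑ j ∈ t, (∑ i ∈ s, P i j) * T j = ∑ i ∈ s, ∑ j ∈ t, P i j * T j := by
        simp only [sum_mul]; exact sum_comm
    _ ≤ ∑ i ∈ s, ∑ j ∈ t, P i j * (S i + c i j) :=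
        sum_le_sum fun i hi => sum_le_sum fun j hj =>
          mul_le_mul_of_nonneg_left (hST i hi j hj) (hP i hi j hj)
    _ = ∑ i ∈ s, (∑ j ∈ t, P i j) * S i + ∑ i ∈ s, ∑ j ∈ t, c i j * P i j := by
        simp only [mul_add, sum_add_distrib, sum_mul, mul_comm (c _ _)]

end Finset

theorem stmt_5_general {X Y : Type*} (d : ℕ)
    (ℓ : Y → Y → ℝ)
    (hℓ0 : ∀ a b, 0 ≤ ℓ a b) (hℓ1 : ∀ a b, ℓ a b ≤ 1)
    (f : X → EuclideanSpace ℝ (Fin d))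
    (γ : ℝ)
    (w : X → Y)
    (ns nt : ℕ) (hnt : 0 < nt)
    (x : Fin ns → X) (y : Fin ns → Y)
    (tx : Fin nt → X) (ty : Fin nt → Y)
    (α : ℝ) (hα0 : 0 < α)
    (Pl : Fin ns → Fin nt → ℝ)
    (hPl : ∀ i j, 0 ≤ Pl i j)
    (hmass : ∑ i, ∑ j, Pl i j = α)
    (L : ℝ)
    (hcomp : ∀ i j,
      |ℓ (w (x i)) (y i) - ℓ (w (tx j)) (ty j)| ≤
        2 * γ * ‖f (x i) - f (tx j)‖ + 2 * L) :
    (1 / (nt : ℝ)) * ∑ j, ℓ (w (tx j)) (ty j) ≤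
      ∑ i, ((∑ j, Pl i j) / α) * ℓ (w (x i)) (y i)
        + (2 / α) * ∑ i, ∑ j, γ * ‖f (x i) - f (tx j)‖ * Pl i j
        + (1 / 2) * ∑ j, |1 / (nt : ℝ) - (∑ i, Pl i j) / α|
        + 2 * L := by
  set S : Fin ns → ℝ := fun i => ℓ (w (x i)) (y i)
  set T : Fin nt → ℝ := fun j => ℓ (w (tx j)) (ty j)
  set D := ∑ i, ∑ j, γ * ‖f (x i) - f (tx j)‖ * Pl i j
  have hmarginal : ∑ _j : Fin nt, (1 / (nt : ℝ)) = ∑ j, (∑ i, Pl i j) / α := by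
    rw [sum_const, card_univ, Fintype.card_fin, nsmul_eq_mul, mul_one_div_cancel (by positivity),
      ← sum_div, sum_comm, hmass, div_self hα0.ne']
  have hmismatch := sum_mul_sub_sum_mul_le_of_sum_eq univ hmarginal (T := T) (lo := 0) (hi := 1)
    fun j _ => ⟨hℓ0 _ _, hℓ1 _ _⟩
  have htransport := sum_colSum_mul_le_sum_rowSum_mul_add univ univ (S := S) (T := T)
    (c := fun i j => 2 * (γ * ‖f (x i) - f (tx j)‖) + 2 * L) (fun i _ j _ => hPl i j)
    fun i _ j _ => by linarith [(abs_le.mp (hcomp i j)).1]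
  have hcost : ∑ i, ∑ j, (2 * (γ * ‖f (x i) - f (tx j)‖) + 2 * L) * Pl i j = 2 * D + 2 * L * α := by
    simp only [add_mul, sum_add_distrib, mul_assoc, ← mul_sum, hmass, D]
  have hcoupled : ∑ j, (∑ i, Pl i j) / α * T j ≤
      ∑ i, (∑ j, Pl i j) / α * S i + 2 / α * D + 2 * L :=
    calc ∑ j, (∑ i, Pl i j) / α * T j = (∑ j, (∑ i, Pl i j) * T j) / α := by
          rw [sum_div]; simp only [div_mul_eq_mul_div]
      _ ≤ (∑ i, (∑ j, Pl i j) * S i + (2 * D + 2 * L * α)) / α := by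
          gcongr; rwa [← hcost]
      _ = ∑ i, (∑ j, Pl i j) / α * S i + 2 / α * D + 2 * L := by
          rw [add_div, sum_div]
          simp only [div_mul_eq_mul_div]
          field_simp
          ring
  rw [mul_sum]
  linarith

/-- Core inequality behind the feature-based empirical target loss bound
(Theorem 3.2 of the paper). -/
theorem stmt_5 {X Y : Type*} (d : ℕ)
    (ℓ : Y → Y → ℝ)
    (hℓ0 : ∀ a b, 0 ≤ ℓ a b) (hℓ1 : ∀ a b, ℓ a b ≤ 1)
    (heq : ∀ a b, ℓ a b = 0 ↔ a = b)
    (hsymm : ∀ a b, ℓ a b = ℓ b a)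
    (htri : ∀ a b c, ℓ a c ≤ ℓ a b + ℓ b c)
    (f : X → EuclideanSpace ℝ (Fin d))
    (g : EuclideanSpace ℝ (Fin d) → Y)
    (γ : ℝ) (hγ : 0 < γ)
    (hLip : ∀ t t', ℓ (g t) (g t') ≤ γ * ‖t - t'‖)
    (w : X → Y) (hw : w = fun x => g (f x))
    (ns nt : ℕ) (hns : 0 < ns) (hnt : 0 < nt)
    (x : Fin ns → X) (y : Fin ns → Y)
    (tx : Fin nt → X) (ty : Fin nt → Y)
    (α : ℝ) (hα0 : 0 < α) (hα1 : α ≤ 1)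
    (Pl : Fin ns → Fin nt → ℝ)
    (hPl : ∀ i j, 0 ≤ Pl i j)
    (hmass : ∑ i, ∑ j, Pl i j = α)
    (L : ℝ) (hL : 0 ≤ L)
    (hcomp : ∀ i j,
      |ℓ (w (x i)) (y i) - ℓ (w (tx j)) (ty j)| ≤
        2 * γ * ‖f (x i) - f (tx j)‖ + 2 * L) :
    (1 / (nt : ℝ)) * ∑ j, ℓ (w (tx j)) (ty j) ≤
      ∑ i, ((∑ j, Pl i j) / α) * ℓ (w (x i)) (y i)
        + (2 / α) * ∑ i, ∑ j, γ * ‖f (x i) - f (tx j)‖ * Pl i j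
        + (1 / 2) * ∑ j, |1 / (nt : ℝ) - (∑ i, Pl i j) / α|
        + 2 * L :=
  stmt_5_general d ℓ hℓ0 hℓ1 f γ w ns nt hnt x y tx ty α hα0 Pl hPl hmass L hcomp
end

section
/- Joint distribution-based transport bound (core inequality): let ℓ be a metric on Y with values in [0,1] that is ζ-Lipschitz in each argument (with Y ⊆ ℝ), f : X → ℝ^d, and let w = g∘f and w' = g'∘f with g, g' : ℝ^d → Y each γ-Lipschitz with respect to the Euclidean distance (i.e., |g(t)−g(t')| ≤ γ‖t−t'‖). Let Π be an n_s × n_t nonnegative matrix with row sums p̂_i, column sums q̂_j. Then ∑_j q̂_j ℓ(w(x̃_j), w'(x̃_j)) − ∑_i p̂_i ℓ(w'(x_i), y_i) ≤ ∑_{i,j} Π_{ij} [ ζγ‖f(x̃_j) − f(x_i)‖ + ℓ(w(x̃_j), y_i) ]. -/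
open Finset

/-!
For every pair `(i, j)`, the triangle inequality through `y i` and the Lipschitz property of `ℓ`
and of `g' ∘ f` give
`ℓ(w x̃ⱼ, w' x̃ⱼ) - ℓ(w' xᵢ, yᵢ) ≤ ζ γ ‖f x̃ⱼ - f xᵢ‖ + ℓ(w x̃ⱼ, yᵢ)`.
Weighting by `Π i j ≥ 0` and summing turns the left side into the difference of the two
marginal-weighted losses.
-/

theorem sub_le_mul_dist_add_of_lipschitz_right {α : Type*} [PseudoMetricSpace α]
    {ℓ : α → α → ℝ} (hsymm : ∀ a b, ℓ a b = ℓ b a) (htri : ∀ a b c, ℓ a c ≤ ℓ a b + ℓ b c)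
    {ζ : ℝ} (hLip : ∀ a b c, |ℓ a b - ℓ a c| ≤ ζ * dist b c) (p q q' y : α) :
    ℓ p q - ℓ q' y ≤ ζ * dist q q' + ℓ p y := by
  have hvia : ℓ p q ≤ ℓ p y + ℓ y q := htri p y q
  have hmove : ℓ y q - ℓ y q' ≤ ζ * dist q q' := (le_abs_self _).trans (hLip y q q')
  linarith [hsymm y q']

theorem sum_marginal_mul_sub_sum_marginal_mul_le {ι κ : Type*} [Fintype ι] [Fintype κ]
    {P : ι → κ → ℝ} (hP : ∀ i j, 0 ≤ P i j) {u : κ → ℝ} {v : ι → ℝ} {c : ι → κ → ℝ}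
    (h : ∀ i j, u j - v i ≤ c i j) :
    ∑ j, (∑ i, P i j) * u j - ∑ i, (∑ j, P i j) * v i ≤ ∑ i, ∑ j, P i j * c i j := by
  have hsplit : ∑ j, (∑ i, P i j) * u j - ∑ i, (∑ j, P i j) * v i
      = ∑ i, ∑ j, P i j * (u j - v i) := by
    simp only [mul_sub, sum_sub_distrib, sum_mul]
    rw [sum_comm (f := fun j i => P i j * u j)]
  rw [hsplit]
  gcongr with i _ j _
  exacts [hP i j, h i j]

theorem stmt_6_general {X : Type*} (d : ℕ)
    (ℓ : ℝ → ℝ → ℝ)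
    (hsymm : ∀ a b, ℓ a b = ℓ b a)
    (htri : ∀ a b c, ℓ a c ≤ ℓ a b + ℓ b c)
    (ζ : ℝ) (hζ : 0 < ζ)
    (hLipℓ : ∀ a b c, |ℓ a b - ℓ a c| ≤ ζ * |b - c|)
    (f : X → EuclideanSpace ℝ (Fin d))
    (g' : EuclideanSpace ℝ (Fin d) → ℝ)
    (γ : ℝ)
    (hLipg' : ∀ t t', |g' t - g' t'| ≤ γ * ‖t - t'‖)
    (w w' : X → ℝ) (hw' : w' = fun x => g' (f x))
    (ns nt : ℕ)
    (x : Fin ns → X) (y : Fin ns → ℝ)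
    (tx : Fin nt → X)
    (Pl : Fin ns → Fin nt → ℝ)
    (hPl : ∀ i j, 0 ≤ Pl i j) :
    ∑ j, (∑ i, Pl i j) * ℓ (w (tx j)) (w' (tx j))
      - ∑ i, (∑ j, Pl i j) * ℓ (w' (x i)) (y i) ≤
      ∑ i, ∑ j, Pl i j * (ζ * γ * ‖f (tx j) - f (x i)‖ + ℓ (w (tx j)) (y i)) := by
  subst hw'
  refine sum_marginal_mul_sub_sum_marginal_mul_le hPl fun i j => ?_
  calc _ ≤ ζ * dist (g' (f (tx j))) (g' (f (x i))) + ℓ (w (tx j)) (y i) :=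
        sub_le_mul_dist_add_of_lipschitz_right hsymm htri
          (fun a b c => by simpa only [Real.dist_eq] using hLipℓ a b c) _ _ _ _
    _ ≤ ζ * (γ * ‖f (tx j) - f (x i)‖) + ℓ (w (tx j)) (y i) := by
        gcongr
        exact hLipg' _ _
    _ = ζ * γ * ‖f (tx j) - f (x i)‖ + ℓ (w (tx j)) (y i) := by ring

/-- Core joint distribution-based transport inequality (Theorem 3.3 of the paper),
with label space `Y ⊆ ℝ`. -/
theorem stmt_6 {X : Type*} (d : ℕ)
    (ℓ : ℝ → ℝ → ℝ)
    (hℓ0 : ∀ a b, 0 ≤ ℓ a b) (hℓ1 : ∀ a b, ℓ a b ≤ 1)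
    (heq : ∀ a b, ℓ a b = 0 ↔ a = b)
    (hsymm : ∀ a b, ℓ a b = ℓ b a)
    (htri : ∀ a b c, ℓ a c ≤ ℓ a b + ℓ b c)
    (ζ : ℝ) (hζ : 0 < ζ)
    (hLipℓ : ∀ a b c, |ℓ a b - ℓ a c| ≤ ζ * |b - c|)
    (hLipℓ' : ∀ a b c, |ℓ a c - ℓ b c| ≤ ζ * |a - b|)
    (f : X → EuclideanSpace ℝ (Fin d))
    (g g' : EuclideanSpace ℝ (Fin d) → ℝ)
    (γ : ℝ) (hγ : 0 < γ)
    (hLipg : ∀ t t', |g t - g t'| ≤ γ * ‖t - t'‖)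
    (hLipg' : ∀ t t', |g' t - g' t'| ≤ γ * ‖t - t'‖)
    (w w' : X → ℝ) (hw : w = fun x => g (f x)) (hw' : w' = fun x => g' (f x))
    (ns nt : ℕ) (hns : 0 < ns) (hnt : 0 < nt)
    (x : Fin ns → X) (y : Fin ns → ℝ)
    (tx : Fin nt → X)
    (Pl : Fin ns → Fin nt → ℝ)
    (hPl : ∀ i j, 0 ≤ Pl i j) :
    ∑ j, (∑ i, Pl i j) * ℓ (w (tx j)) (w' (tx j))
      - ∑ i, (∑ j, Pl i j) * ℓ (w' (x i)) (y i) ≤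
      ∑ i, ∑ j, Pl i j * (ζ * γ * ‖f (tx j) - f (x i)‖ + ℓ (w (tx j)) (y i)) :=
  stmt_6_general d ℓ hsymm htri ζ hζ hLipℓ f g' γ hLipg' w w' hw' ns nt x y tx Pl hPl
end
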